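/- There exists a finite set H = {φ¹, φ²} of constructive, base-independent (uniform) reductions such that the atomic Split rule p → q ∨ r / (p → q) ∨ (p → r) is logically valid in miP-tV relative to H: for every base B, every extension C ⊇ B, every reduction set J, and every closed argument ⟨D₁, J⟩ for p → q ∨ r valid on C, the structure obtained by appending the Split inference below D₁, paired with J ∪ H, is valid on C. -/

import Mathlib

/-- Propositional atoms: `⊥` and countably many atoms `p n`. -/
inductive PAtom : Type
  | bot
  | p (n : ℕ)
deriving DecidableEq

/-- Formulas of the propositional language. -/
inductive Formula : Type
  | atom (a : PAtom)
  | and (A B : Formula)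
  | or (A B : Formula)
  | imp (A B : Formula)
deriving DecidableEq

/-- Atomic rules (level ≤ 1): a list of atomic premises and an atomic conclusion.
An axiom (level-0 rule) is `⟨[], a⟩`. -/
structure ARule where
  prems : List PAtom
  concl : PAtom
deriving DecidableEq

/-- The atomic explosion rules: from `⊥` infer any atom. -/
def AE : Set ARule := { r | ∃ a, r = ⟨[PAtom.bot], a⟩ }

/-- An atomic base is a set of atomic rules containing atomic explosion. -/
def IsBase (B : Set ARule) : Prop := AE ⊆ B

/-- Argument structures: natural-deduction-style trees with arbitrary inference
steps. `hyp A` is an assumption; `node c prems` is an inference to conclusion `c`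
from the listed premise subtrees, where each premise comes with a list of
assumption-formulas it discharges in that subtree. An axiom is `node c []`. -/
inductive Arg : Type
  | hyp (A : Formula)
  | node (concl : Formula) (prems : List (List Formula × Arg))

/-- Conclusion of an argument structure. -/
def Arg.concl : Arg → Formula
  | .hyp A => A
  | .node c _ => c

mutual
/-- The (open, i.e. undischarged) assumption-formulas of an argument structure. -/
def Arg.assumptions : Arg → Finset Formula
  | .hyp A => {A}
  | .node _ prems => assumptionsList prems

def assumptionsList : List (List Formula × Arg) → Finset Formula
  | [] => ∅
  | pr :: rest => (Arg.assumptions pr.2 \ pr.1.toFinset) ∪ assumptionsList rest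
end

mutual
/-- Substitution of argument structures for the open assumptions of an argument
structure; `bound` records the assumption-formulas discharged above. -/
def Arg.subst (σ : Formula → Arg) (bound : Finset Formula) : Arg → Arg
  | .hyp A => if A ∈ bound then .hyp A else σ A
  | .node c prems => .node c (substList σ bound prems)

def substList (σ : Formula → Arg) (bound : Finset Formula) :
    List (List Formula × Arg) → List (List Formula × Arg)
  | [] => []
  | pr :: rest => (pr.1, Arg.subst σ (bound ∪ pr.1.toFinset) pr.2) :: substList σ bound rest
end

/-- `AtomDeriv B D` : the argument structure `D` is an atomic derivation of the
base `B` (every node is an application of a rule of `B`). -/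
inductive AtomDeriv (B : Set ARule) : Arg → Prop
  | app (r : ARule) (hr : r ∈ B) (subs : List Arg)
      (hc : subs.map Arg.concl = r.prems.map Formula.atom)
      (hs : ∀ D ∈ subs, AtomDeriv B D) :
      AtomDeriv B (.node (.atom r.concl) (subs.map (fun D => ([], D))))

/-- A reduction is a partial function on argument structures. -/
abbrev Red := Arg → Option Arg

/-- One-step reduction relative to a set of reductions `J`: apply some `φ ∈ J` to
some substructure. -/
inductive Step (J : Set Red) : Arg → Arg → Prop
  | red {φ : Red} {D D' : Arg} : φ ∈ J → φ D = some D' → Step J D D'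
  | congr {c : Formula} {pre post : List (List Formula × Arg)} {ds : List Formula}
      {D D' : Arg} : Step J D D' →
      Step J (.node c (pre ++ (ds, D) :: post)) (.node c (pre ++ (ds, D') :: post))

/-- `D` reduces to `D'` relative to `J` (reflexive-transitive closure). -/
def Reduces (J : Set Red) : Arg → Arg → Prop := Relation.ReflTransGen (Step J)

/-- Validity of closed arguments `⟨D, J⟩` on a base `B`, by recursion on the
conclusion: a closed argument with atomic conclusion must reduce to an atomic
derivation of the base; one with compound conclusion must reduce to a canonical
(introduction-ended) closed structure whose immediate substructures are valid
(for `→`, valid as an open argument: under every extension of the reduction set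
and of the base, substitution of valid closed arguments for the discharged
assumption yields a valid closed argument). -/
def CValid : Formula → Set ARule → Set Red → Arg → Prop
  | .atom a, B, J, D => ∃ D', Reduces J D D' ∧ AtomDeriv B D' ∧ D'.concl = .atom a
  | .and A C, B, J, D => ∃ D1 D2 : Arg,
      Reduces J D (.node (A.and C) [([], D1), ([], D2)]) ∧
      D1.assumptions = ∅ ∧ D2.assumptions = ∅ ∧ D1.concl = A ∧ D2.concl = C ∧
      CValid A B J D1 ∧ CValid C B J D2
  | .or A C, B, J, D =>
      (∃ D1 : Arg, Reduces J D (.node (A.or C) [([], D1)]) ∧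
        D1.assumptions = ∅ ∧ D1.concl = A ∧ CValid A B J D1) ∨
      (∃ D1 : Arg, Reduces J D (.node (A.or C) [([], D1)]) ∧
        D1.assumptions = ∅ ∧ D1.concl = C ∧ CValid C B J D1)
  | .imp A C, B, J, D => ∃ D1 : Arg,
      Reduces J D (.node (A.imp C) [([A], D1)]) ∧
      D1.assumptions ⊆ {A} ∧ D1.concl = C ∧
      ∀ H : Set Red, J ⊆ H → ∀ X : Set ARule, B ⊆ X → ∀ E : Arg,
        E.assumptions = ∅ → E.concl = A → CValid A X H E →
        CValid C X H (Arg.subst (fun _ => E) ∅ D1)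

/-- Validity of an argument `⟨D, J⟩` on a base `B` (Prawitz, monotonic
introduction-based form): closed arguments as in `CValid`; an open argument is
valid iff for every extension `H ⊇ J` of the reduction set, every extension
`X ⊇ B` of the base, and every assignment of closed arguments valid on `X`
(w.r.t. `H`) to its open assumptions, the resulting closed instance is valid
on `X` w.r.t. `H`. -/
def Valid (B : Set ARule) (D : Arg) (J : Set Red) : Prop :=
  if D.assumptions = ∅ then CValid D.concl B J D
  else ∀ (σ : Formula → Arg) (H : Set Red) (X : Set ARule), J ⊆ H → B ⊆ X →
    (∀ A ∈ D.assumptions, (σ A).assumptions = ∅ ∧ (σ A).concl = A ∧ CValid A X H (σ A)) →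
    CValid D.concl X H (Arg.subst σ ∅ D)

/-- Logical validity: validity on every atomic base. -/
def LValid (D : Arg) (J : Set Red) : Prop :=
  ∀ B : Set ARule, IsBase B → Valid B D J

/-- miP-tV consequence over a base: `Γ ⊨_B A` iff there is an argument `⟨D, J⟩`
valid on `B` with `D` an argument structure from `Γ` to `A`. -/
def EntailsOn (B : Set ARule) (Γ : Finset Formula) (A : Formula) : Prop :=
  ∃ (D : Arg) (J : Set Red), D.assumptions = Γ ∧ D.concl = A ∧ Valid B D J

/-- miP-tV logical consequence: `Γ ⊨ A` iff there is a logically valid argument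
`⟨D, J⟩` with `D` from `Γ` to `A`. -/
def Entails (Γ : Finset Formula) (A : Formula) : Prop :=
  ∃ (D : Arg) (J : Set Red), D.assumptions = Γ ∧ D.concl = A ∧ LValid D J

/-!
A closed valid argument for `p → q ∨ r` reduces to an `→`-introduction over an open
argument `D₂`. Instantiating the assumption `p` in `D₂` by the axiom `p` of the extended base
`X ∪ {⊢ p}` (which is what φ¹ does) gives a valid closed argument for `q ∨ r`, so it reduces to an
`∨`-introduction over an atomic derivation of, say, `q` in `X ∪ {⊢ p}`. φ² turns the axioms `p` of
that derivation back into assumptions and swaps the two introductions, so the Split structure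
reduces to an `∨`-introduction of `p → q`. This implication is valid on `X`: a valid closed
argument for `p` on a base `X' ⊇ X` reduces to an atomic derivation of `p` in `X'`, and grafting
it onto each reopened assumption yields an atomic derivation of `q` in `X'`.
-/

open Relation

theorem List.exists_forall₂_of_forall_exists {α β : Type*} {R : α → β → Prop} :
    ∀ {l : List α}, (∀ a ∈ l, ∃ b, R a b) → ∃ l', List.Forall₂ R l l'
  | [], _ => ⟨[], .nil⟩
  | a :: _, h =>
    have ⟨b, hb⟩ := h a List.mem_cons_self
    have ⟨l', hl'⟩ := exists_forall₂_of_forall_exists fun x hx => h x (List.mem_cons_of_mem a hx)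
    ⟨b :: l', .cons hb hl'⟩

theorem Step.mono {J K : Set Red} (hJK : J ⊆ K) {D D' : Arg} (h : Step J D D') : Step K D D' := by
  induction h with
  | red hφ hD => exact .red (hJK hφ) hD
  | congr _ ih => exact .congr ih

theorem Reduces.mono {J K : Set Red} (hJK : J ⊆ K) {D D' : Arg} (h : Reduces J D D') :
    Reduces K D D' :=
  ReflTransGen.mono (fun _ _ => Step.mono hJK) _ _ h

theorem Reduces.congr {J : Set Red} {D D' : Arg} (h : Reduces J D D') (c : Formula)
    (pre post : List (List Formula × Arg)) (ds : List Formula) :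
    Reduces J (.node c (pre ++ (ds, D) :: post)) (.node c (pre ++ (ds, D') :: post)) := by
  induction h with
  | refl => exact .refl
  | tail _ s ih => exact ih.tail (.congr s)

theorem Reduces.congr_singleton {J : Set Red} {D D' : Arg} (h : Reduces J D D') (c : Formula)
    (ds : List Formula) : Reduces J (.node c [(ds, D)]) (.node c [(ds, D')]) :=
  h.congr c [] [] ds

theorem Reduces.node_map_of_forall₂ {J : Set Red} (c : Formula) {l l' : List Arg}
    (h : List.Forall₂ (Reduces J) l l') :
    Reduces J (.node c (l.map (([], ·)))) (.node c (l'.map (([], ·)))) := by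
  suffices ∀ pre,
      Reduces J (.node c (pre ++ l.map (([], ·)))) (.node c (pre ++ l'.map (([], ·)))) by
    simpa using this []
  induction h with
  | nil => exact fun _ => .refl
  | @cons D D' _ _ hD _ ih =>
    intro pre
    have := ih (pre ++ [([], D')])
    simp only [List.append_assoc, List.singleton_append] at this
    exact (hD.congr c pre _ []).trans this

theorem assumptionsList_map_subset {s : Finset Formula} {l : List Arg}
    (h : ∀ D ∈ l, D.assumptions ⊆ s) : assumptionsList (l.map (([], ·))) ⊆ s := by
  induction l with
  | nil => simp [assumptionsList]
  | cons D l ih =>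
    simp only [List.map_cons, assumptionsList, List.toFinset_nil, Finset.sdiff_empty]
    exact Finset.union_subset (h D List.mem_cons_self)
      (ih fun D' hD' => h D' (List.mem_cons_of_mem D hD'))

theorem substList_map (σ : Formula → Arg) (l : List Arg) :
    substList σ ∅ (l.map (([], ·))) = (l.map (Arg.subst σ ∅)).map (([], ·)) := by
  induction l with
  | nil => rfl
  | cons D l ih => simp [substList, ih]

mutual
def Arg.axiomsToHyp (a : Formula) : Arg → Arg
  | .hyp A => .hyp A
  | .node c prems =>
      if c = a ∧ prems.isEmpty then .hyp a else .node c (axiomsToHypList a prems)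

def axiomsToHypList (a : Formula) : List (List Formula × Arg) → List (List Formula × Arg)
  | [] => []
  | pr :: rest => (pr.1, pr.2.axiomsToHyp a) :: axiomsToHypList a rest
end

theorem axiomsToHypList_map (a : Formula) (l : List Arg) :
    axiomsToHypList a (l.map (([], ·))) = (l.map (Arg.axiomsToHyp a)).map (([], ·)) := by
  induction l with
  | nil => rfl
  | cons D l ih => simp [axiomsToHypList, ih]

theorem Arg.concl_axiomsToHyp (a : Formula) (D : Arg) : (D.axiomsToHyp a).concl = D.concl := by
  cases D with
  | hyp A => rfl
  | node c prems =>
    simp only [Arg.axiomsToHyp]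
    split_ifs with h
    · exact h.1.symm
    · rfl

theorem AtomDeriv.assumptions_axiomsToHyp_subset {B : Set ARule} {D : Arg} (hD : AtomDeriv B D)
    (a : Formula) : (D.axiomsToHyp a).assumptions ⊆ {a} := by
  induction hD with
  | app r _ subs _ _ ih =>
    by_cases h : Formula.atom r.concl = a ∧ subs = []
    · simp [Arg.axiomsToHyp, h, Arg.assumptions]
    · simp only [Arg.axiomsToHyp, List.isEmpty_map, List.isEmpty_iff, h, if_false, Arg.assumptions,
        axiomsToHypList_map]
      exact assumptionsList_map_subset (by simpa using ih)

theorem AtomDeriv.reduces_subst_axiomsToHyp {X X' : Set ARule} {p : PAtom} {D : Arg}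
    (hD : AtomDeriv (X ∪ {⟨[], p⟩}) D) (hXX' : X ⊆ X') {H : Set Red} {E Ep : Arg}
    (hE : Reduces H E Ep) (hEp : AtomDeriv X' Ep) (hEpc : Ep.concl = .atom p) :
    ∃ D', Reduces H ((D.axiomsToHyp (.atom p)).subst (fun _ => E) ∅) D' ∧
      AtomDeriv X' D' ∧ D'.concl = D.concl := by
  induction hD with
  | app r hr subs hc _ ih =>
    by_cases hax : r.concl = p ∧ subs = []
    · refine ⟨Ep, ?_, hEp, by rw [hEpc, hax.1]; rfl⟩
      simpa [Arg.axiomsToHyp, hax, Arg.subst] using hE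
    have hrX' : r ∈ X' := by
      rcases hr with hr | rfl
      · exact hXX' hr
      · exact absurd ⟨rfl, List.map_eq_nil_iff.1 hc⟩ hax
    obtain ⟨subs', hsubs'⟩ := List.exists_forall₂_of_forall_exists ih
    refine ⟨.node (.atom r.concl) (subs'.map (([], ·))), ?_, .app r hrX' subs' ?_ ?_, rfl⟩
    · have hax' : ¬(Formula.atom r.concl = .atom p ∧ subs = []) := by simpa using hax
      simp only [Arg.axiomsToHyp, List.isEmpty_map, List.isEmpty_iff, hax', if_false,
        axiomsToHypList_map, Arg.subst]
      rw [substList_map]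
      refine Reduces.node_map_of_forall₂ _ ?_
      simpa only [List.forall₂_map_left_iff] using hsubs'.imp fun _ _ h => h.1
    · rw [← hc]
      clear hc ih hax
      induction hsubs' <;> simp_all
    · clear hc ih hax
      induction hsubs' <;> simp_all

-- φ¹ of the paper.
def closeAssumptionByAxiom : Red
  | .node S [([], .node (.imp A C) [(ds, D)])] =>
      if ds = [A] then
        some (.node S [([], .node (A.imp C) [([A], D.subst (fun _ => .node A []) ∅)])])
      else none
  | _ => none

-- φ² of the paper. The Split inference `S` stays in place and serves as the new `∨`-introduction.
def swapOrIntroImpIntro : Red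
  | .node S [([], .node (.imp A _) [(ds, .node _ [([], G)])])] =>
      if ds = [A] then some (.node S [([], .node (A.imp G.concl) [([A], G.axiomsToHyp A)])])
      else none
  | _ => none

theorem reduces_split {K : Set Red} (h₁ : closeAssumptionByAxiom ∈ K)
    (h₂ : swapOrIntroImpIntro ∈ K) {S A C O : Formula} {D D₂ G Dq : Arg}
    (hD : Reduces K D (.node (A.imp C) [([A], D₂)]))
    (hG : Reduces K (D₂.subst (fun _ => .node A []) ∅) (.node O [([], G)]))
    (hDq : Reduces K G Dq) :
    Reduces K (.node S [([], D)])
      (.node S [([], .node (A.imp Dq.concl) [([A], Dq.axiomsToHyp A)])]) := by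
  have hclose : Step K (.node S [([], .node (A.imp C) [([A], D₂)])])
      (.node S [([], .node (A.imp C) [([A], D₂.subst (fun _ => .node A []) ∅)])]) :=
    .red h₁ (by simp [closeAssumptionByAxiom])
  have hinner : Reduces K (D₂.subst (fun _ => .node A []) ∅) (.node O [([], Dq)]) :=
    hG.trans (hDq.congr_singleton O [])
  have hswap : Step K (.node S [([], .node (A.imp C) [([A], .node O [([], Dq)])])])
      (.node S [([], .node (A.imp Dq.concl) [([A], Dq.axiomsToHyp A)])]) :=
    .red h₂ (by simp [swapOrIntroImpIntro])
  exact ((hD.congr_singleton S []).tail hclose).trans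
    ((Reduces.congr_singleton (hinner.congr_singleton _ [A]) S []).tail hswap)

theorem AtomDeriv.cvalid_impIntro_axiomsToHyp {X : Set ARule} {K : Set Red} {p a : PAtom}
    {D : Arg} (hD : AtomDeriv (X ∪ {⟨[], p⟩}) D) (hc : D.concl = .atom a) :
    CValid ((Formula.atom p).imp (.atom a)) X K
      (.node ((Formula.atom p).imp (.atom a)) [([.atom p], D.axiomsToHyp (.atom p))]) := by
  refine ⟨_, .refl, hD.assumptions_axiomsToHyp_subset _, by rw [Arg.concl_axiomsToHyp, hc], ?_⟩
  rintro H - X' hXX' E - - ⟨Ep, hE, hEp, hEpc⟩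
  obtain ⟨D', hD', hD'X', hD'c⟩ := hD.reduces_subst_axiomsToHyp hXX' hE hEp hEpc
  exact ⟨D', hD', hD'X', hD'c.trans hc⟩

theorem Arg.assumptions_node_singleton (c : Formula) (D : Arg) :
    (Arg.node c [([], D)]).assumptions = D.assumptions := by
  simp [Arg.assumptions, assumptionsList]

theorem assumptions_impIntro {A C : Formula} {D : Arg} (hD : D.assumptions ⊆ {A}) :
    (Arg.node (A.imp C) [([A], D)]).assumptions = ∅ := by
  simpa [Arg.assumptions, assumptionsList] using hD

theorem cvalid_axiom (X : Set ARule) (K : Set Red) (p : PAtom) :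
    CValid (.atom p) (X ∪ {⟨[], p⟩}) K (.node (.atom p) []) :=
  ⟨_, .refl, .app ⟨[], p⟩ (Or.inr rfl) [] rfl (by simp), rfl⟩

theorem exists_reduces_split_impIntro {X : Set ARule} {J K : Set Red} (hJK : J ⊆ K)
    (h₁ : closeAssumptionByAxiom ∈ K) (h₂ : swapOrIntroImpIntro ∈ K) {p a : PAtom}
    {S C O : Formula} {D D₂ G Dq : Arg}
    (hD : Reduces J D (.node ((Formula.atom p).imp C) [([.atom p], D₂)]))
    (hG : Reduces K (D₂.subst (fun _ => .node (.atom p) []) ∅) (.node O [([], G)]))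
    (hDq : Reduces K G Dq) (hDqX : AtomDeriv (X ∪ {⟨[], p⟩}) Dq) (hc : Dq.concl = .atom a) :
    ∃ D', Reduces K (.node S [([], D)]) (.node S [([], D')]) ∧ D'.assumptions = ∅ ∧
      D'.concl = (Formula.atom p).imp (.atom a) ∧ CValid ((Formula.atom p).imp (.atom a)) X K D' :=
  ⟨_, hc ▸ reduces_split h₁ h₂ (hD.mono hJK) hG hDq,
    assumptions_impIntro (hDqX.assumptions_axiomsToHyp_subset _), rfl,
    hDqX.cvalid_impIntro_axiomsToHyp hc⟩

theorem CValid.split {X : Set ARule} {J K : Set Red} (hJK : J ⊆ K)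
    (h₁ : closeAssumptionByAxiom ∈ K) (h₂ : swapOrIntroImpIntro ∈ K) {p q r : PAtom} {D : Arg}
    (hD : CValid ((Formula.atom p).imp ((Formula.atom q).or (.atom r))) X J D) :
    CValid (((Formula.atom p).imp (.atom q)).or ((Formula.atom p).imp (.atom r))) X K
      (.node (((Formula.atom p).imp (.atom q)).or ((Formula.atom p).imp (.atom r))) [([], D)]) := by
  obtain ⟨D₂, hD₂, -, -, hinst⟩ := hD
  have hdisj := hinst K hJK (X ∪ {⟨[], p⟩}) Set.subset_union_left _ rfl rfl (cvalid_axiom X K p)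
  rcases hdisj with ⟨G, hG, -, -, Dq, hDq, hDqX, hc⟩ | ⟨G, hG, -, -, Dq, hDq, hDqX, hc⟩
  · exact .inl (exists_reduces_split_impIntro hJK h₁ h₂ hD₂ hG hDq hDqX hc)
  · exact .inr (exists_reduces_split_impIntro hJK h₁ h₂ hD₂ hG hDq hDqX hc)

/-- there is a finite set `Hs = {φ¹, φ²}` of (uniform, constructive,
base-independent) reductions making the atomic Split rule logically valid in
miP-tV relative to `Hs`: for every base `B`, every extension `X ⊇ B`, every
reduction set `J` and every closed argument `⟨D₁, J⟩` for `p → q ∨ r` valid on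
`X`, appending the Split inference below `D₁` and pairing with `J ∪ Hs` yields an
argument valid on `X`. -/
theorem atomic_split_uniform_reductions (np nq nr : ℕ)
    (hpq : np ≠ nq) (hpr : np ≠ nr) (hqr : nq ≠ nr) :
    ∃ Hs : Set Red, Hs.Finite ∧
      ∀ B : Set ARule, IsBase B → ∀ X : Set ARule, B ⊆ X → ∀ (J : Set Red) (D1 : Arg),
        D1.assumptions = ∅ →
        D1.concl = (Formula.atom (PAtom.p np)).imp
          ((Formula.atom (PAtom.p nq)).or (Formula.atom (PAtom.p nr))) →
        Valid X D1 J →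
        Valid X
          (Arg.node (((Formula.atom (PAtom.p np)).imp (Formula.atom (PAtom.p nq))).or
              ((Formula.atom (PAtom.p np)).imp (Formula.atom (PAtom.p nr))))
            [([], D1)])
          (J ∪ Hs) := by
  refine ⟨{closeAssumptionByAxiom, swapOrIntroImpIntro}, Set.toFinite _, ?_⟩
  intro B _ X _ J D1 hD1 hD1c hval
  rw [Valid, if_pos hD1, hD1c] at hval
  rw [Valid, if_pos ((Arg.assumptions_node_singleton _ _).trans hD1)]
  exact hval.split Set.subset_union_left (by simp) (by simp)
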